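/- For i ∈ π₊(ε), the following multiplication rule holds pointwise in F(ℰ; S): σ_{(i)} · σ_ε = σ_{(i)}(ε) · σ_ε + Σ_{j < i, j ∈ π₋(ε)} c_j · σ_{ε + (j)}, where c_j = (s_{μ_j}(α_j^i(ε)) − α_j^i(ε))/μ_j ∈ ℤ and α_j^i(ε) = v_{j+1}^{i−1}(ε)(μ_i) with v_a^b(ε) = ∏_{a ≤ k ≤ b, k ∈ π₊(ε)} s_{μ_k}. -/

import Mathlib

open scoped Classical

/-- The simple root `α_b`, as a vector in the span `B → ℚ` of the simple roots. -/
noncomputable def simpleRoot {B : Type} [DecidableEq B] (b : B) : B → ℚ := Pi.single b 1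

/-- The pairing `⟨x, α_b^∨⟩` determined by the Cartan matrix `Cmat` (so that
`⟨α_a, α_b^∨⟩ = Cmat a b`). -/
noncomputable def pairC {B : Type} [Fintype B] (Cmat : B → B → ℤ) (x : B → ℚ) (b : B) : ℚ :=
  ∑ a, x a * (Cmat a b : ℚ)

/-- The simple reflection `s_b : x ↦ x - ⟨x, α_b^∨⟩ α_b`. -/
noncomputable def srefl {B : Type} [Fintype B] [DecidableEq B] (Cmat : B → B → ℤ) (b : B)
    (x : B → ℚ) : B → ℚ :=
  x - pairC Cmat x b • simpleRoot b

/-- Apply a word `s_{b_1} s_{b_2} ⋯ s_{b_k}` of simple reflections to `x`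
(leftmost factor applied last). -/
noncomputable def applyWord {B : Type} [Fintype B] [DecidableEq B] (Cmat : B → B → ℤ)
    (w : List B) (x : B → ℚ) : B → ℚ :=
  w.foldr (fun b y => srefl Cmat b y) x

/-- The word `(μ_k)_{k ∈ π₊(ε), k < i}`, in increasing order of `k`. -/
def wordBelow {B : Type} {n : ℕ} (μ : Fin n → B) (ε : Fin n → Bool) (i : Fin n) : List B :=
  ((List.finRange n).filter (fun k => ε k && decide (k < i))).map μ

/-- The word `(μ_k)_{k ∈ π₊(ε)}`, in increasing order of `k`. -/
def wordOf {B : Type} {n : ℕ} (μ : Fin n → B) (ε : Fin n → Bool) : List B :=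
  ((List.finRange n).filter (fun k => ε k)).map μ

/-- `α_i(ε) = v_{i-1}(ε)(μ_i)`. -/
noncomputable def alphaE {B : Type} [Fintype B] [DecidableEq B] (Cmat : B → B → ℤ) {n : ℕ}
    (μ : Fin n → B) (ε : Fin n → Bool) (i : Fin n) : B → ℚ :=
  applyWord Cmat (wordBelow μ ε i) (simpleRoot (μ i))

/-- The order `ε ≤ ε'` on `ℰ = {0,1}^N`: containment of supports `π₊(ε) ⊆ π₊(ε')`. -/
def leE {n : ℕ} (ε ε' : Fin n → Bool) : Prop := ∀ k, ε k = true → ε' k = true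

/-- `l(ε) = card π₊(ε)`. -/
def lE {n : ℕ} (ε : Fin n → Bool) : ℕ := (Finset.univ.filter (fun k : Fin n => ε k = true)).card

/-- The linear embedding of the weight space into `S = Sym(𝔥^*) = ℚ[X_b : b ∈ B]`. -/
noncomputable def toS {B : Type} [Fintype B] (x : B → ℚ) : MvPolynomial B ℚ :=
  ∑ b, MvPolynomial.C (x b) * MvPolynomial.X b

/-- `σ_ε : ℰ → S`, `σ_ε(ε') = ∏_{i ∈ π₊(ε)} α_i(ε')` if `ε ≤ ε'`, and `0` otherwise. -/
noncomputable def sigE {B : Type} [Fintype B] [DecidableEq B] (Cmat : B → B → ℤ) {n : ℕ}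
    (μ : Fin n → B) (ε ε' : Fin n → Bool) : MvPolynomial B ℚ :=
  if leE ε ε' then ∏ i ∈ Finset.univ.filter (fun i : Fin n => ε i = true), toS (alphaE Cmat μ ε' i)
  else 0

/-- The indicator element `(i) ∈ ℰ`. -/
def indE {n : ℕ} (i : Fin n) : Fin n → Bool := fun k => decide (k = i)

/-- Addition in `ℰ = (ℤ/2)^N`. -/
def addE {n : ℕ} (ε η : Fin n → Bool) : Fin n → Bool := fun k => xor (ε k) (η k)

/-- A word is reduced if no shorter word of simple reflections represents the same
Weyl-group element. -/
def IsReducedWord {B : Type} [Fintype B] [DecidableEq B] (Cmat : B → B → ℤ) (w : List B) : Prop :=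
  ∀ w' : List B, applyWord Cmat w' = applyWord Cmat w → w.length ≤ w'.length

/-- `x` is a (real) root: the image of a simple root under a product of simple reflections. -/
def IsRoot {B : Type} [Fintype B] [DecidableEq B] (Cmat : B → B → ℤ) (x : B → ℚ) : Prop :=
  ∃ (w : List B) (b : B), x = applyWord Cmat w (simpleRoot b)

/-- `x` is a positive root. -/
def IsPos {B : Type} [Fintype B] [DecidableEq B] (Cmat : B → B → ℤ) (x : B → ℚ) : Prop :=
  IsRoot Cmat x ∧ ∀ b, 0 ≤ x b

/-- `x` is a negative root. -/
def IsNeg {B : Type} [Fintype B] [DecidableEq B] (Cmat : B → B → ℤ) (x : B → ℚ) : Prop :=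
  IsRoot Cmat x ∧ ∀ b, x b ≤ 0

/-- `Cmat` is a generalized Cartan matrix. -/
def IsGCM {B : Type} (Cmat : B → B → ℤ) : Prop :=
  (∀ b, Cmat b b = 2) ∧ (∀ a b, a ≠ b → Cmat a b ≤ 0) ∧ (∀ a b, Cmat a b = 0 → Cmat b a = 0)

/-- `α_j^i(ε) = v_{j+1}^{i-1}(ε)(μ_i)`, the product of the reflections `s_{μ_k}` for
`j < k < i`, `k ∈ π₊(ε)` (increasing order), applied to `μ_i`. -/
noncomputable def alphaJI {B : Type} [Fintype B] [DecidableEq B] (Cmat : B → B → ℤ) {n : ℕ}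
    (μ : Fin n → B) (ε : Fin n → Bool) (j i : Fin n) : B → ℚ :=
  applyWord Cmat (((List.finRange n).filter (fun k => ε k && decide (j < k) && decide (k < i))).map μ)
    (simpleRoot (μ i))

/-- `c_j = (s_{μ_j}(α_j^i(ε)) − α_j^i(ε))/μ_j`: the scalar `c` with
`s_{μ_j}(α_j^i(ε)) − α_j^i(ε) = c • α_{μ_j}`, namely `−⟨α_j^i(ε), μ_j^∨⟩`. -/
noncomputable def cJ {B : Type} [Fintype B] [DecidableEq B] (Cmat : B → B → ℤ) {n : ℕ}
    (μ : Fin n → B) (ε : Fin n → Bool) (j i : Fin n) : ℚ :=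
  -(pairC Cmat (alphaJI Cmat μ ε j i) (μ j))

/-! Both sides vanish unless `ε ≤ ε'`, and for `ε j = 0` one has
`σ_{ε+(j)}(ε') = [ε' j = 1] · α_j(ε') · σ_ε(ε')`, so after dividing by `σ_ε(ε')` the identity
becomes the root identity `α_i(ε') = α_i(ε) + Σ_{j < i, ε j = 0, ε' j = 1} c_j α_j(ε')`.
It is proved by inserting the missing reflections `s_{μ_j}` into the word of `α_i(ε)` one at a
time, smallest `j` first: inserting `s_{μ_j}` between `v_{j-1}` and `v_{j+1}^{i-1}` replaces
`v_{j-1}(α_j^i)` by `v_{j-1}(α_j^i + c_j μ_j)`, i.e. adds `c_j v_{j-1}(μ_j) = c_j α_j`, and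
because `j` is the smallest new index neither `v_{j-1}` nor the later coefficients `c_k` change.
The `c_j` are integers because simple reflections preserve the integer lattice. -/

theorem List.Pairwise.filter_or_eq_append {α : Type*} [Preorder α] {l : List α}
    (hl : l.Pairwise (· < ·)) {p q : α → Bool} (hpq : ∀ x y, p x → q y → x < y) :
    l.filter (fun x => p x || q x) = l.filter p ++ l.filter q := by
  induction l with
  | nil => rfl
  | cons a t ih =>
    obtain ⟨ha, ht⟩ := List.pairwise_cons.1 hl
    by_cases hpa : p a
    · have hqa : q a = false := by
        by_contra h
        exact lt_irrefl a (hpq a a hpa (by simpa using h))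
      simp [hpa, hqa, ih ht]
    · by_cases hqa : q a
      · have hpt : t.filter p = [] := List.filter_eq_nil_iff.2 fun x hx hpx =>
          lt_asymm (ha x hx) (hpq x a hpx hqa)
        simp [hpa, hqa, ih ht, hpt]
      · simp [hpa, hqa, ih ht]

theorem List.filter_finRange_eq_singleton {n : ℕ} (j : Fin n) :
    (List.finRange n).filter (fun k => decide (k = j)) = [j] := by
  rw [List.filter_eq, List.count_eq_one_of_mem (List.nodup_finRange n) (List.mem_finRange j)]
  rfl

theorem simpleRoot_eq_intCast {B : Type} [DecidableEq B] (b : B) :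
    simpleRoot b = fun a => ((Pi.single b 1 : B → ℤ) a : ℚ) := by
  ext a
  by_cases h : a = b
  · subst h; simp [simpleRoot]
  · simp [simpleRoot, h]

section Reflections

variable {B : Type} [Fintype B] (Cmat : B → B → ℤ)

theorem pairC_add (x y : B → ℚ) (b : B) :
    pairC Cmat (x + y) b = pairC Cmat x b + pairC Cmat y b := by
  simp [pairC, add_mul, Finset.sum_add_distrib]

theorem pairC_smul (c : ℚ) (x : B → ℚ) (b : B) :
    pairC Cmat (c • x) b = c * pairC Cmat x b := by
  simp [pairC, Finset.mul_sum, mul_assoc]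

theorem pairC_intCast (v : B → ℤ) (b : B) :
    pairC Cmat (fun a => (v a : ℚ)) b = ((∑ a, v a * Cmat a b : ℤ) : ℚ) := by
  push_cast [pairC]
  rfl

theorem toS_add (x y : B → ℚ) : toS (x + y) = toS x + toS y := by
  simp [toS, add_mul, Finset.sum_add_distrib]

theorem toS_smul (c : ℚ) (x : B → ℚ) : toS (c • x) = MvPolynomial.C c * toS x := by
  simp [toS, Finset.mul_sum, mul_assoc]

theorem toS_sum {ι : Type*} (s : Finset ι) (f : ι → B → ℚ) :
    toS (∑ j ∈ s, f j) = ∑ j ∈ s, toS (f j) := by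
  simp only [toS, Finset.sum_apply, map_sum, Finset.sum_mul]
  exact Finset.sum_comm

variable [DecidableEq B]

theorem srefl_add (b : B) (x y : B → ℚ) :
    srefl Cmat b (x + y) = srefl Cmat b x + srefl Cmat b y := by
  simp only [srefl, pairC_add, add_smul]
  abel

theorem srefl_smul (b : B) (c : ℚ) (x : B → ℚ) :
    srefl Cmat b (c • x) = c • srefl Cmat b x := by
  simp only [srefl, pairC_smul, smul_sub, mul_smul]

theorem applyWord_cons (b : B) (w : List B) (x : B → ℚ) :
    applyWord Cmat (b :: w) x = srefl Cmat b (applyWord Cmat w x) := rfl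

theorem applyWord_append (w₁ w₂ : List B) (x : B → ℚ) :
    applyWord Cmat (w₁ ++ w₂) x = applyWord Cmat w₁ (applyWord Cmat w₂ x) :=
  List.foldr_append

theorem applyWord_add (w : List B) (x y : B → ℚ) :
    applyWord Cmat w (x + y) = applyWord Cmat w x + applyWord Cmat w y := by
  induction w with
  | nil => rfl
  | cons b w ih => simp only [applyWord_cons, ih, srefl_add]

theorem applyWord_smul (w : List B) (c : ℚ) (x : B → ℚ) :
    applyWord Cmat w (c • x) = c • applyWord Cmat w x := by
  induction w with
  | nil => rfl
  | cons b w ih => simp only [applyWord_cons, ih, srefl_smul]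

theorem exists_applyWord_eq_intCast (w : List B) (v : B → ℤ) :
    ∃ v' : B → ℤ, applyWord Cmat w (fun a => (v a : ℚ)) = fun a => (v' a : ℚ) := by
  induction w with
  | nil => exact ⟨v, rfl⟩
  | cons b w ih =>
    obtain ⟨v', hv'⟩ := ih
    refine ⟨v' - (∑ a, v' a * Cmat a b) • Pi.single b 1, ?_⟩
    ext a
    rw [applyWord_cons, hv', srefl, simpleRoot, pairC_intCast]
    by_cases h : a = b
    · subst h; simp
    · simp [h]

end Reflections

section Words

variable {B : Type} {n : ℕ} (μ : Fin n → B)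

def wordBetween (ε : Fin n → Bool) (j i : Fin n) : List B :=
  ((List.finRange n).filter (fun k => ε k && decide (j < k) && decide (k < i))).map μ

theorem wordBelow_eq_append {ε : Fin n → Bool} {j i : Fin n} (hji : j < i) (hεj : ε j = false) :
    wordBelow μ ε i = wordBelow μ ε j ++ wordBetween μ ε j i := by
  rw [wordBelow, wordBelow, wordBetween, ← List.map_append,
    ← (List.pairwise_lt_finRange n).filter_or_eq_append fun x y hx hy => by
      simp only [Bool.and_eq_true, decide_eq_true_eq] at hx hy
      exact hx.2.trans hy.1.2]
  congr 1
  refine List.filter_congr fun k _ => ?_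
  rcases lt_trichotomy k j with hk | rfl | hk
  · simp [hk, hk.trans hji, hk.not_gt]
  · simp [hεj]
  · simp [hk, hk.not_gt]

theorem wordBelow_update_eq (ε : Fin n → Bool) {j i : Fin n} (hji : j < i) :
    wordBelow μ (Function.update ε j true) i = wordBelow μ ε j ++ μ j :: wordBetween μ ε j i := by
  have hsplit := (List.pairwise_lt_finRange n).filter_or_eq_append
    (p := fun k => decide (k = j)) (q := fun k => ε k && decide (j < k) && decide (k < i))
    (by simp +contextual)
  rw [wordBelow, wordBelow, wordBetween, ← List.map_cons, ← List.singleton_append,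
    ← List.filter_finRange_eq_singleton j, ← hsplit, ← List.map_append,
    ← (List.pairwise_lt_finRange n).filter_or_eq_append fun x y hx hy => by
      simp only [Bool.and_eq_true, Bool.or_eq_true, decide_eq_true_eq] at hx hy
      rcases hy with rfl | hy
      exacts [hx.2, hx.2.trans hy.1.2]]
  congr 1
  refine List.filter_congr fun k _ => ?_
  rcases lt_trichotomy k j with hk | rfl | hk
  · simp [hk, hk.trans hji, hk.ne, hk.not_gt]
  · simp [hji]
  · simp [hk, hk.ne', hk.not_gt]

end Words

section Order

variable {n : ℕ}

theorem apply_eq_of_leE {ε ε' : Fin n → Bool} (hle : leE ε ε') {k : Fin n}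
    (hk : ¬(ε k = false ∧ ε' k = true)) : ε k = ε' k := by
  have := hle k
  revert hk this
  cases ε k <;> cases ε' k <;> simp

theorem leE_update_true_iff {ε ε' : Fin n → Bool} {j : Fin n} :
    leE (Function.update ε j true) ε' ↔ ε' j = true ∧ leE ε ε' := by
  refine ⟨fun h => ⟨h j (by simp), fun k hk => h k ?_⟩, fun ⟨hj, h⟩ k hk => ?_⟩
  · by_cases hkj : k = j
    · simp [hkj]
    · rwa [Function.update_of_ne hkj]
  · by_cases hkj : k = j
    · exact hkj ▸ hj
    · exact h k (by rwa [Function.update_of_ne hkj] at hk)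

theorem addE_indE_of_eq_false {ε : Fin n → Bool} {j : Fin n} (hεj : ε j = false) :
    addE ε (indE j) = Function.update ε j true := by
  funext k
  by_cases hk : k = j
  · subst hk; simp [addE, indE, hεj]
  · simp [addE, indE, hk]

end Order

section Alpha

variable {B : Type} [Fintype B] [DecidableEq B] (Cmat : B → B → ℤ) {n : ℕ} (μ : Fin n → B)

theorem alphaJI_eq (ε : Fin n → Bool) (j i : Fin n) :
    alphaJI Cmat μ ε j i = applyWord Cmat (wordBetween μ ε j i) (simpleRoot (μ i)) := rfl

theorem alphaE_congr {ε ε' : Fin n → Bool} {i : Fin n} (h : ∀ k < i, ε k = ε' k) :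
    alphaE Cmat μ ε i = alphaE Cmat μ ε' i := by
  simp only [alphaE, wordBelow]
  congr 2
  refine List.filter_congr fun k _ => ?_
  by_cases hk : k < i <;> simp [hk, h]

theorem cJ_congr {ε ε' : Fin n → Bool} {j i : Fin n} (h : ∀ k, j < k → k < i → ε k = ε' k) :
    cJ Cmat μ ε j i = cJ Cmat μ ε' j i := by
  simp only [cJ, alphaJI]
  congr 4
  refine List.filter_congr fun k _ => ?_
  by_cases hjk : j < k <;> by_cases hki : k < i <;> simp [hjk, hki, h]

theorem alphaE_update_eq {ε : Fin n → Bool} {j i : Fin n} (hji : j < i) (hεj : ε j = false) :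
    alphaE Cmat μ (Function.update ε j true) i =
      alphaE Cmat μ ε i + cJ Cmat μ ε j i • alphaE Cmat μ ε j := by
  rw [alphaE, alphaE, wordBelow_update_eq μ ε hji, wordBelow_eq_append μ hji hεj,
    applyWord_append, applyWord_append, applyWord_cons, srefl, sub_eq_add_neg, ← neg_smul,
    applyWord_add, applyWord_smul]
  rfl

theorem exists_cJ_eq_intCast (ε : Fin n → Bool) (j i : Fin n) :
    ∃ m : ℤ, cJ Cmat μ ε j i = m := by
  obtain ⟨v, hv⟩ := exists_applyWord_eq_intCast Cmat (wordBetween μ ε j i) (Pi.single (μ i) 1)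
  refine ⟨-∑ a, v a * Cmat a (μ j), ?_⟩
  rw [cJ, alphaJI_eq, simpleRoot_eq_intCast, hv, pairC_intCast, Int.cast_neg]

open Finset in
theorem alphaE_eq_add_sum_of_leE {ε ε' : Fin n → Bool} (hle : leE ε ε') (i : Fin n) :
    alphaE Cmat μ ε' i = alphaE Cmat μ ε i +
      ∑ j ∈ univ.filter (fun j => j < i ∧ ε j = false ∧ ε' j = true),
        cJ Cmat μ ε j i • alphaE Cmat μ ε' j := by
  suffices ∀ s : Finset (Fin n), ∀ ε, leE ε ε' →
      univ.filter (fun j => j < i ∧ ε j = false ∧ ε' j = true) = s →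
      alphaE Cmat μ ε' i = alphaE Cmat μ ε i + ∑ j ∈ s, cJ Cmat μ ε j i • alphaE Cmat μ ε' j from
    this _ ε hle rfl
  intro s
  induction s using Finset.induction_on_min with
  | empty =>
    intro ε hle hD
    rw [sum_empty, add_zero]
    refine (alphaE_congr Cmat μ fun k hk => apply_eq_of_leE hle fun hk' => ?_).symm
    simpa [hk, hk'] using Finset.ext_iff.1 hD k
  | insert a s has ih =>
    intro ε hle hD
    have has' : a ∉ s := fun h => lt_irrefl a (has a h)
    obtain ⟨hai, hεa, hε'a⟩ : a < i ∧ ε a = false ∧ ε' a = true := by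
      simpa using Finset.ext_iff.1 hD a
    have hmin : ∀ k < a, ε k = ε' k := fun k hka => apply_eq_of_leE hle fun hk => by
      have := Finset.ext_iff.1 hD k
      simp only [mem_filter, mem_univ, true_and, mem_insert, hka.trans hai, hk, hka.ne,
        false_or, true_iff] at this
      exact lt_asymm hka (has k this)
    have hleη : leE (Function.update ε a true) ε' := fun k hk => by
      by_cases hka : k = a
      · exact hka ▸ hε'a
      · exact hle k (by rwa [Function.update_of_ne hka] at hk)
    have hDη : univ.filter
        (fun j => j < i ∧ Function.update ε a true j = false ∧ ε' j = true) = s := by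
      ext k
      by_cases hka : k = a
      · subst hka
        simp [has']
      · simpa [Function.update_of_ne hka, hka] using Finset.ext_iff.1 hD k
    rw [ih _ hleη hDη, alphaE_update_eq Cmat μ hai hεa, sum_insert has', alphaE_congr Cmat μ hmin,
      sum_congr rfl fun j hj => by
        rw [cJ_congr Cmat μ fun k hjk _ => Function.update_of_ne ((has j hj).trans hjk).ne' _ _]]
    abel

end Alpha

section Sigma

variable {B : Type} [Fintype B] [DecidableEq B] (Cmat : B → B → ℤ) {n : ℕ} (μ : Fin n → B)

theorem sigE_of_not_leE {ε ε' : Fin n → Bool} (h : ¬leE ε ε') : sigE Cmat μ ε ε' = 0 :=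
  if_neg h

theorem sigE_indE {ε' : Fin n → Bool} {i : Fin n} (hi : ε' i = true) :
    sigE Cmat μ (indE i) ε' = toS (alphaE Cmat μ ε' i) := by
  have hsupp : Finset.univ.filter (fun k => indE i k = true) = {i} := by
    ext k
    simp [indE]
  have hle : leE (indE i) ε' := fun k hk => by rwa [show k = i by simpa [indE] using hk]
  rw [sigE, if_pos hle, hsupp, Finset.prod_singleton]

theorem sigE_update_true {ε : Fin n → Bool} {j : Fin n} (hεj : ε j = false) (ε' : Fin n → Bool) :
    sigE Cmat μ (Function.update ε j true) ε' =
      (if ε' j = true then toS (alphaE Cmat μ ε' j) else 0) * sigE Cmat μ ε ε' := by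
  have hsupp : Finset.univ.filter (fun k => Function.update ε j true k = true) =
      insert j (Finset.univ.filter fun k => ε k = true) := by
    ext k
    by_cases hk : k = j
    · subst hk; simp
    · simp [hk]
  rw [sigE, sigE, hsupp, Finset.prod_insert (by simp [hεj]), leE_update_true_iff]
  by_cases hj : ε' j = true <;> by_cases hle : leE ε ε' <;> simp [hj, hle]

end Sigma

theorem sig_ind_mul_sig_of_mem_general {B : Type} [Fintype B] [DecidableEq B]
    (Cmat : B → B → ℤ) {n : ℕ} (μ : Fin n → B)
    (ε : Fin n → Bool) (i : Fin n) (hi : ε i = true) :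
    (∀ ε' : Fin n → Bool,
        sigE Cmat μ (indE i) ε' * sigE Cmat μ ε ε' =
          sigE Cmat μ (indE i) ε * sigE Cmat μ ε ε' +
          ∑ j ∈ Finset.univ.filter (fun j : Fin n => j < i ∧ ε j = false),
            MvPolynomial.C (cJ Cmat μ ε j i) * sigE Cmat μ (addE ε (indE j)) ε') ∧
    (∀ j : Fin n, j < i → ε j = false → ∃ m : ℤ, cJ Cmat μ ε j i = (m : ℚ)) := by
  refine ⟨fun ε' => ?_, fun j _ _ => exists_cJ_eq_intCast Cmat μ ε j i⟩
  rw [Finset.sum_congr rfl fun j hj => by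
    rw [addE_indE_of_eq_false (Finset.mem_filter.1 hj).2.2,
      sigE_update_true Cmat μ (Finset.mem_filter.1 hj).2.2]]
  by_cases hle : leE ε ε'
  · rw [sigE_indE Cmat μ (hle i hi), sigE_indE Cmat μ hi, alphaE_eq_add_sum_of_leE Cmat μ hle i,
      toS_add, toS_sum, add_mul, Finset.sum_mul]
    simp only [toS_smul, mul_ite, ite_mul, mul_zero, zero_mul, ← Finset.sum_filter,
      Finset.filter_filter, and_assoc, mul_assoc]
  · simp [sigE_of_not_leE Cmat μ hle]

/-- for `i ∈ π₊(ε)`, pointwise in `F(ℰ; S)`: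
`σ_{(i)} · σ_ε = σ_{(i)}(ε) · σ_ε + Σ_{j < i, j ∈ π₋(ε)} c_j · σ_{ε+(j)}`,
and each `c_j` is an integer. -/
theorem sig_ind_mul_sig_of_mem {B : Type} [Fintype B] [DecidableEq B]
    (Cmat : B → B → ℤ) (hgcm : IsGCM Cmat) {n : ℕ} (μ : Fin n → B)
    (ε : Fin n → Bool) (i : Fin n) (hi : ε i = true) :
    (∀ ε' : Fin n → Bool,
        sigE Cmat μ (indE i) ε' * sigE Cmat μ ε ε' =
          sigE Cmat μ (indE i) ε * sigE Cmat μ ε ε' +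
          ∑ j ∈ Finset.univ.filter (fun j : Fin n => j < i ∧ ε j = false),
            MvPolynomial.C (cJ Cmat μ ε j i) * sigE Cmat μ (addE ε (indE j)) ε') ∧
    (∀ j : Fin n, j < i → ε j = false → ∃ m : ℤ, cJ Cmat μ ε j i = (m : ℚ)) :=
  sig_ind_mul_sig_of_mem_general Cmat μ ε i hi
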